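/- arXiv:math/9904165 — 2 statements merged into one kernel-verified Lean document; each statement's English description precedes it below -/
import Mathlib

section
/- Let X be an n-dimensional Banach lattice with M_(2)(X) = 1, E a Banach space, and λ ∈ ℝⁿ. Then the operator D_λ ⊗ id : ℓ₂ⁿ(E) → X(E), sending (x₁,…,xₙ) to (λ₁x₁,…,λₙxₙ), has operator norm at most ‖D_λ : ℓ₂ⁿ → X‖. -/
/-! The norm of `X(E)` only sees the scalar vector `a = (‖x₁‖, …, ‖xₙ‖)`, and
`‖(λᵢ ‖xᵢ‖)‖_X = ‖a‖₂ · ‖D_λ (a / ‖a‖₂)‖_X ≤ ‖a‖₂ · ‖D_λ‖` by homogeneity of the lattice norm,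
since `a / ‖a‖₂` lies in the unit ball of `ℓ₂ⁿ`. -/

open Complex MeasureTheory Finset

noncomputable section

namespace Paper

/-- The closed unit strip in the complex plane. -/
def Strip : Set ℂ := {z : ℂ | 0 ≤ z.re ∧ z.re ≤ 1}

/-- The open unit strip in the complex plane. -/
def OStrip : Set ℂ := {z : ℂ | 0 < z.re ∧ z.re < 1}

/-- `N` is a norm on the complex vector space `V`. -/
def IsNormC {V : Type*} [AddCommGroup V] [Module ℂ V] (N : V → ℝ) : Prop :=
  (∀ x, 0 ≤ N x) ∧ (∀ x, N x = 0 → x = 0) ∧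
  (∀ (c : ℂ) (x), N (c • x) = ‖c‖ * N x) ∧ (∀ x y, N (x + y) ≤ N x + N y)

/-- `N` is a lattice norm on `ℝⁿ`. -/
def IsLatticeNorm {n : ℕ} (N : (Fin n → ℝ) → ℝ) : Prop :=
  (∀ x, 0 ≤ N x) ∧ (∀ x, N x = 0 → x = 0) ∧
  (∀ (c : ℝ) (x), N (c • x) = |c| * N x) ∧ (∀ x y, N (x + y) ≤ N x + N y) ∧
  (∀ x y, (∀ i, |x i| ≤ |y i|) → N x ≤ N y)

/-- The `r`-th power `X^r` of a lattice norm: `‖x‖_{X^r} = ‖ |x|^{1/r} ‖_X^r`. -/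
def powNorm {n : ℕ} (r : ℝ) (N : (Fin n → ℝ) → ℝ) (x : Fin n → ℝ) : ℝ :=
  (N fun i => |x i| ^ (1 / r)) ^ r

/-- `N` is `p`-convex with constant `C`. -/
def ConvexWith {n : ℕ} (p C : ℝ) (N : (Fin n → ℝ) → ℝ) : Prop :=
  ∀ (m : ℕ) (x : Fin m → Fin n → ℝ),
    N (fun j => (∑ i, |x i j| ^ p) ^ (1 / p)) ≤ C * (∑ i, N (x i) ^ p) ^ (1 / p)

/-- `N` is `p`-concave with constant `C`. -/
def ConcaveWith {n : ℕ} (p C : ℝ) (N : (Fin n → ℝ) → ℝ) : Prop :=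
  ∀ (m : ℕ) (x : Fin m → Fin n → ℝ),
    (∑ i, N (x i) ^ p) ^ (1 / p) ≤ C * N (fun j => (∑ i, |x i j| ^ p) ^ (1 / p))

/-- The dual lattice norm on `ℝⁿ`. -/
def dualNR {n : ℕ} (N : (Fin n → ℝ) → ℝ) (y : Fin n → ℝ) : ℝ :=
  sSup {r : ℝ | ∃ x, N x ≤ 1 ∧ r = |∑ i, x i * y i|}

/-- The Calderón product norm `X₀^{1-θ}X₁^θ` on `ℝⁿ`. -/
def calNorm {n : ℕ} (θ : ℝ) (N₀ N₁ : (Fin n → ℝ) → ℝ) (f : Fin n → ℝ) : ℝ :=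
  sInf {c : ℝ | ∃ g h : Fin n → ℝ, (∀ i, |f i| = |g i| ^ (1 - θ) * |h i| ^ θ) ∧
    c = N₀ g ^ (1 - θ) * N₁ h ^ θ}

/-- The complex interpolation norm `[N₀,N₁]_θ`, computed via analytic functions
of finite type `z ↦ ∑ φᵢ(z) • vᵢ` on the strip (which, by density, gives the
complex interpolation norm on the intersection for couples with dense intersection). -/
def interpN {D : Type*} [AddCommGroup D] [Module ℂ D]
    (θ : ℝ) (N₀ N₁ : D → ℝ) (x : D) : ℝ :=
  sInf {c : ℝ | ∃ (m : ℕ) (φ : Fin m → ℂ → ℂ) (v : Fin m → D),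
    (∀ i, ContinuousOn (φ i) Strip) ∧
    (∀ i, DifferentiableOn ℂ (φ i) OStrip) ∧
    (∀ i, ∃ B : ℝ, ∀ z ∈ Strip, ‖φ i z‖ ≤ B) ∧
    (∑ i, φ i (θ : ℂ) • v i) = x ∧
    (∀ t : ℝ, N₀ (∑ i, φ i (Complex.I * t) • v i) ≤ c) ∧
    (∀ t : ℝ, N₁ (∑ i, φ i (1 + Complex.I * t) • v i) ≤ c)}

/-- Operator "norm" of a map with respect to given norm functions. -/
def opN {X Y : Type*} (NX : X → ℝ) (NY : Y → ℝ) (T : X → Y) : ℝ :=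
  sSup {r : ℝ | ∃ x, NX x ≤ 1 ∧ r = NY (T x)}

/-- The Hilbert space `ℓ₂`. -/
abbrev Hilb := lp (fun _ : ℕ => ℂ) 2

def hilbNorm (x : Hilb) : ℝ := ‖x‖

/-- `d_θ[M₀,M₁]`: the norm of the identity
`L(ℓ₂,[M₀,M₁]_θ) → [L(ℓ₂,M₀),L(ℓ₂,M₁)]_θ`. -/
def dTheta {V : Type*} [NormedAddCommGroup V] [NormedSpace ℂ V]
    (θ : ℝ) (N₀ N₁ : V → ℝ) : ℝ :=
  sSup {r : ℝ | ∃ T : Hilb →L[ℂ] V,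
    opN hilbNorm (interpN θ N₀ N₁) ⇑T ≤ 1 ∧
    r = interpN θ (fun S : Hilb →L[ℂ] V => opN hilbNorm N₀ ⇑S)
        (fun S : Hilb →L[ℂ] V => opN hilbNorm N₁ ⇑S) T}

/-- Rademacher average `(2^{-m} ∑_ε ‖∑ ±xᵢ‖²)`. -/
def radAvg {V : Type*} [AddCommGroup V] (N : V → ℝ) {m : ℕ} (x : Fin m → V) : ℝ :=
  ((2 : ℝ) ^ m)⁻¹ * ∑ ε : Fin m → Bool, N (∑ i, if ε i then x i else -x i) ^ 2

/-- `N` has (Rademacher) type 2 with constant `C`. -/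
def Type2With {V : Type*} [AddCommGroup V] (N : V → ℝ) (C : ℝ) : Prop :=
  ∀ (m : ℕ) (x : Fin m → V), Real.sqrt (radAvg N x) ≤ C * Real.sqrt (∑ i, N (x i) ^ 2)

/-- `N` has (Rademacher) cotype 2 with constant `C`. -/
def Cotype2With {V : Type*} [AddCommGroup V] (N : V → ℝ) (C : ℝ) : Prop :=
  ∀ (m : ℕ) (x : Fin m → V), Real.sqrt (∑ i, N (x i) ^ 2) ≤ C * Real.sqrt (radAvg N x)

/-- The injective tensor norm of two norm functions. -/
def injN {V W : Type*} [AddCommGroup V] [Module ℂ V] [AddCommGroup W] [Module ℂ W]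
    (NV : V → ℝ) (NW : W → ℝ) (z : TensorProduct ℂ V W) : ℝ :=
  sSup {r : ℝ | ∃ (φ : V →ₗ[ℂ] ℂ) (ψ : W →ₗ[ℂ] ℂ),
    (∀ x, ‖φ x‖ ≤ NV x) ∧ (∀ y, ‖ψ y‖ ≤ NW y) ∧
    r = ‖TensorProduct.lift (((LinearMap.mul ℂ ℂ).comp φ).compl₂ ψ) z‖}

/-- Dual norm on linear functionals. -/
def dualNC {V : Type*} [AddCommGroup V] [Module ℂ V] (N : V → ℝ) (φ : V →ₗ[ℂ] ℂ) : ℝ :=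
  sSup {r : ℝ | ∃ x, N x ≤ 1 ∧ r = ‖φ x‖}

/-- The space of bounded linear functionals (dual space of the completion). -/
def BddDual {V : Type*} [AddCommGroup V] [Module ℂ V] (N : V → ℝ) :
    Submodule ℂ (V →ₗ[ℂ] ℂ) where
  carrier := {φ | ∃ c : ℝ, ∀ x, ‖φ x‖ ≤ c * N x}
  zero_mem' := ⟨0, by simp⟩
  add_mem' := by
    rintro φ ψ ⟨c, hc⟩ ⟨d, hd⟩
    exact ⟨c + d, fun x => by
      have h1 := hc x; have h2 := hd x
      calc ‖(φ + ψ) x‖ = ‖φ x + ψ x‖ := by simp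
        _ ≤ ‖φ x‖ + ‖ψ x‖ := norm_add_le _ _
        _ ≤ (c + d) * N x := by rw [add_mul]; exact add_le_add h1 h2⟩
  smul_mem' := by
    rintro a φ ⟨c, hc⟩
    exact ⟨‖a‖ * c, fun x => by
      have : ‖(a • φ) x‖ = ‖a‖ * ‖φ x‖ := by simp [norm_smul]
      rw [this, mul_assoc]
      exact mul_le_mul_of_nonneg_left (hc x) (norm_nonneg a)⟩

/-- Strictly simple functions with values in `V`: the span of
`v`-valued indicators of finite-measure measurable sets. -/
def SimpleSub {Ω : Type*} [MeasurableSpace Ω] (μ : Measure Ω)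
    (V : Type*) [AddCommGroup V] [Module ℂ V] : Submodule ℂ (Ω → V) :=
  Submodule.span ℂ {f | ∃ (s : Set Ω) (v : V), MeasurableSet s ∧ μ s < ⊤ ∧
    f = s.indicator fun _ => v}

/-- A Banach function space over a measure `μ`, with `K`-valued functions. -/
structure BFS (Ω : Type*) [MeasurableSpace Ω] (μ : Measure Ω) (K : Type*) [RCLike K] where
  mem : (Ω → K) → Prop
  nrm : (Ω → K) → ℝ
  mem_zero : mem 0
  mem_add : ∀ f g, mem f → mem g → mem (f + g)
  mem_smul : ∀ (c : K) (f), mem f → mem (c • f)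
  mem_meas : ∀ f, mem f → AEStronglyMeasurable f μ
  ideal : ∀ f g, AEStronglyMeasurable f μ → mem g →
    (∀ᵐ ω ∂μ, ‖f ω‖ ≤ ‖g ω‖) → mem f ∧ nrm f ≤ nrm g
  nrm_nonneg : ∀ f, 0 ≤ nrm f
  nrm_eq_zero : ∀ f, mem f → nrm f = 0 → f =ᵐ[μ] 0
  nrm_add : ∀ f g, mem f → mem g → nrm (f + g) ≤ nrm f + nrm g
  nrm_smul : ∀ (c : K) (f), nrm (c • f) = ‖c‖ * nrm f
  mem_indicator : ∀ s : Set Ω, MeasurableSet s → μ s < ⊤ →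
    mem (s.indicator fun _ => 1)
  complete : ∀ f : ℕ → Ω → K, (∀ k, mem (f k)) →
    (∀ ε : ℝ, 0 < ε → ∃ N : ℕ, ∀ p q, N ≤ p → N ≤ q → nrm (f p - f q) < ε) →
    ∃ g, mem g ∧ ∀ ε : ℝ, 0 < ε → ∃ N : ℕ, ∀ p, N ≤ p → nrm (f p - g) < ε

variable {Ω : Type*} [MeasurableSpace Ω] {μ : Measure Ω} {K : Type*} [RCLike K]

/-- `X` is `r`-convex with constant `C`. -/
def BFS.RConvexWith (X : BFS Ω μ K) (r C : ℝ) : Prop :=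
  ∀ (m : ℕ) (f : Fin m → Ω → K), (∀ i, X.mem (f i)) →
    X.mem (fun ω => ((((∑ i, ‖f i ω‖ ^ r) ^ (1 / r) : ℝ) : K))) ∧
    X.nrm (fun ω => ((((∑ i, ‖f i ω‖ ^ r) ^ (1 / r) : ℝ) : K))) ≤
      C * (∑ i, X.nrm (f i) ^ r) ^ (1 / r)

/-- `X` is `r`-concave with constant `C`. -/
def BFS.RConcaveWith (X : BFS Ω μ K) (r C : ℝ) : Prop :=
  ∀ (m : ℕ) (f : Fin m → Ω → K), (∀ i, X.mem (f i)) →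
    (∑ i, X.nrm (f i) ^ r) ^ (1 / r) ≤
      C * X.nrm (fun ω => ((((∑ i, ‖f i ω‖ ^ r) ^ (1 / r) : ℝ) : K)))

/-- `‖D_λ : ℓ₂ⁿ → X‖` for the lattice norm `N` of `X`. -/
def diagOpNorm {n : ℕ} (N : (Fin n → ℝ) → ℝ) (lam : Fin n → ℝ) : ℝ :=
  sSup {r : ℝ | ∃ y : Fin n → ℝ, Real.sqrt (∑ i, y i ^ 2) ≤ 1 ∧
    r = N (fun i => lam i * y i)}

theorem abs_le_sqrt_sum_sq {n : ℕ} (a : Fin n → ℝ) (i : Fin n) :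
    |a i| ≤ Real.sqrt (∑ j, a j ^ 2) :=
  Real.abs_le_sqrt (single_le_sum (fun j _ => sq_nonneg (a j)) (mem_univ i))

theorem sqrt_sum_sq_div_sqrt_sum_sq_le_one {n : ℕ} (a : Fin n → ℝ) :
    Real.sqrt (∑ i, (a i / Real.sqrt (∑ j, a j ^ 2)) ^ 2) ≤ 1 := by
  simp_rw [div_pow, ← sum_div]
  rw [Real.sq_sqrt (sum_nonneg fun j _ => sq_nonneg (a j))]
  exact Real.sqrt_le_one.mpr (div_self_le_one _)

namespace IsLatticeNorm

variable {n : ℕ} {N : (Fin n → ℝ) → ℝ}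

theorem map_smul (hN : IsLatticeNorm N) (c : ℝ) (u : Fin n → ℝ) : N (c • u) = |c| * N u :=
  hN.2.2.1 c u

theorem mono (hN : IsLatticeNorm N) {u v : Fin n → ℝ} (h : ∀ i, |u i| ≤ |v i|) : N u ≤ N v :=
  hN.2.2.2.2 u v h

theorem congr_abs (hN : IsLatticeNorm N) {u v : Fin n → ℝ} (h : ∀ i, |u i| = |v i|) :
    N u = N v :=
  le_antisymm (hN.mono fun i => (h i).le) (hN.mono fun i => (h i).ge)

theorem bddAbove_diag (hN : IsLatticeNorm N) (lam : Fin n → ℝ) :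
    BddAbove {r : ℝ | ∃ y : Fin n → ℝ, Real.sqrt (∑ i, y i ^ 2) ≤ 1 ∧
      r = N (fun i => lam i * y i)} := by
  refine ⟨N (fun i => |lam i|), ?_⟩
  rintro r ⟨y, hy, rfl⟩
  refine hN.mono fun i => ?_
  have hyi : |y i| ≤ 1 := (abs_le_sqrt_sum_sq y i).trans hy
  rw [abs_mul, abs_abs]
  exact mul_le_of_le_one_right (abs_nonneg _) hyi

theorem le_diagOpNorm (hN : IsLatticeNorm N) (lam : Fin n → ℝ) {y : Fin n → ℝ}
    (hy : Real.sqrt (∑ i, y i ^ 2) ≤ 1) : N (fun i => lam i * y i) ≤ diagOpNorm N lam :=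
  le_csSup (hN.bddAbove_diag lam) ⟨y, hy, rfl⟩

theorem map_diag_le (hN : IsLatticeNorm N) (lam a : Fin n → ℝ) :
    N (fun i => lam i * a i) ≤ diagOpNorm N lam * Real.sqrt (∑ i, a i ^ 2) := by
  set S := Real.sqrt (∑ i, a i ^ 2)
  -- `a = S • (a / S)` also when `S = 0`, since then `a = 0`.
  have hdecomp : ∀ i, a i = S * (a i / S) := fun i => by
    rcases eq_or_ne S 0 with hS | hS
    · have h : |a i| ≤ S := abs_le_sqrt_sum_sq a i
      rw [hS, abs_nonpos_iff] at h
      simp [h]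
    · field_simp
  calc N (fun i => lam i * a i) = N (S • fun i => lam i * (a i / S)) := by
        congr 1; funext i; rw [Pi.smul_apply, smul_eq_mul]; conv_lhs => rw [hdecomp i]
        ring
    _ = S * N (fun i => lam i * (a i / S)) := by
        rw [hN.map_smul, abs_of_nonneg (Real.sqrt_nonneg _)]
    _ ≤ S * diagOpNorm N lam :=
        mul_le_mul_of_nonneg_left (hN.le_diagOpNorm lam (sqrt_sum_sq_div_sqrt_sum_sq_le_one a))
          (Real.sqrt_nonneg _)
    _ = diagOpNorm N lam * S := mul_comm _ _

end IsLatticeNorm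

theorem statement2_general {n : ℕ} (N : (Fin n → ℝ) → ℝ) (hN : IsLatticeNorm N)
    {E : Type*} [NormedAddCommGroup E]
    [NormedSpace ℝ E] (lam : Fin n → ℝ) (x : Fin n → E) :
    N (fun i => ‖lam i • x i‖) ≤
      sSup {r : ℝ | ∃ y : Fin n → ℝ, Real.sqrt (∑ i, y i ^ 2) ≤ 1 ∧
          r = N (fun i => lam i * y i)} * Real.sqrt (∑ i, ‖x i‖ ^ 2) := by
  have hnorm : N (fun i => ‖lam i • x i‖) = N (fun i => lam i * ‖x i‖) :=
    hN.congr_abs fun i => by rw [norm_smul, Real.norm_eq_abs, abs_mul, abs_mul, abs_abs, abs_norm]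
  rw [hnorm]
  exact hN.map_diag_le lam fun i => ‖x i‖

/-- `‖D_λ ⊗ id : ℓ₂ⁿ(E) → X(E)‖ ≤ ‖D_λ : ℓ₂ⁿ → X‖` for a
2-concave (constant 1) lattice norm `N` and a Banach space `E`. -/
theorem statement2 {n : ℕ} (N : (Fin n → ℝ) → ℝ) (hN : IsLatticeNorm N)
    (hconc : ConcaveWith 2 1 N) {E : Type*} [NormedAddCommGroup E]
    [NormedSpace ℝ E] [CompleteSpace E] (lam : Fin n → ℝ) (x : Fin n → E) :
    N (fun i => ‖lam i • x i‖) ≤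
      sSup {r : ℝ | ∃ y : Fin n → ℝ, Real.sqrt (∑ i, y i ^ 2) ≤ 1 ∧
          r = N (fun i => lam i * y i)} * Real.sqrt (∑ i, ‖x i‖ ^ 2) :=
  statement2_general N hN lam x

end Paper
end
end

section
/- Let X₀, X₁ be Banach function spaces over the same σ-finite measure space, both r-concave for some 1 ≤ r < ∞, and let 0 < θ < 1. Then the Calderón product X₀^{1-θ}X₁^{θ} is r-concave with M_(r)(X₀^{1-θ}X₁^{θ}) ≤ M_(r)(X₀)^{1-θ}·M_(r)(X₁)^{θ}. -/
open Complex MeasureTheory Finset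

noncomputable section

namespace Paper

variable {Ω : Type*} [MeasurableSpace Ω] {μ : Measure Ω} {K : Type*} [RCLike K]

/-- The Calderón product membership for Banach function spaces. -/
def BFS.calMem {Ω' : Type*} [MeasurableSpace Ω'] {μ' : Measure Ω'} {K' : Type*}
    [RCLike K'] (X₀ X₁ : BFS Ω' μ' K') (θ : ℝ) (f : Ω' → K') : Prop :=
  AEStronglyMeasurable f μ' ∧ ∃ g h, X₀.mem g ∧ X₁.mem h ∧
    ∀ᵐ ω ∂μ', ‖f ω‖ = ‖g ω‖ ^ (1 - θ) * ‖h ω‖ ^ θ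

/-- The Calderón product norm for Banach function spaces. -/
def BFS.calNrm {Ω' : Type*} [MeasurableSpace Ω'] {μ' : Measure Ω'} {K' : Type*}
    [RCLike K'] (X₀ X₁ : BFS Ω' μ' K') (θ : ℝ) (f : Ω' → K') : ℝ :=
  sInf {c : ℝ | ∃ g h, X₀.mem g ∧ X₁.mem h ∧
    (∀ᵐ ω ∂μ', ‖f ω‖ = ‖g ω‖ ^ (1 - θ) * ‖h ω‖ ^ θ) ∧
    c = X₀.nrm g ^ (1 - θ) * X₁.nrm h ^ θ}


/-!
If `|fᵢ| = |gᵢ|^{1-θ} |hᵢ|^θ`, then `F = (∑ |fᵢ|^r)^{1/r} ≤ ∑ |fᵢ| ≤ (∑ |gᵢ|)^{1-θ} (∑ |hᵢ|)^θ`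
by Hölder, so `F` lies in the Calderón product (this matters: `calNrm` is an `sInf`, which is `0`
on the empty set). Conversely, take any factorization `F = |g|^{1-θ} |h|^θ` and put
`aᵢ = |fᵢ| / F`, so that `∑ aᵢ^r ≤ 1` and `fᵢ` factorizes as `(aᵢ g, aᵢ h)`. Then `r`-concavity
bounds `(∑ ‖aᵢ g‖^r)^{1/r}` by `C₀ ‖(∑ |aᵢ g|^r)^{1/r}‖ ≤ C₀ ‖g‖`, likewise for `h`, and Hölder's
inequality with exponents `r/(1-θ)` and `r/θ` gives
`(∑ ‖fᵢ‖^r)^{1/r} ≤ (∑ (‖aᵢ g‖^{1-θ} ‖aᵢ h‖^θ)^r)^{1/r} ≤ (C₀ ‖g‖)^{1-θ} (C₁ ‖h‖)^θ`.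
A negative concavity constant forces the norm of its space to vanish, and then all Calderón
norms vanish.
-/

section RealInequalities

open Real

lemma rpow_one_sub_mul_rpow_self (θ : ℝ) {a : ℝ} (ha : 0 ≤ a) : a ^ (1 - θ) * a ^ θ = a := by
  rw [← rpow_add' ha (by norm_num), sub_add_cancel, rpow_one]

lemma mul_rpow_one_sub_mul_mul_rpow (θ : ℝ) {t G H : ℝ} (ht : 0 ≤ t) (hG : 0 ≤ G) (hH : 0 ≤ H) :
    (t * G) ^ (1 - θ) * (t * H) ^ θ = t * (G ^ (1 - θ) * H ^ θ) := by
  rw [mul_rpow ht hG, mul_rpow ht hH, mul_mul_mul_comm, rpow_one_sub_mul_rpow_self θ ht]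

lemma le_rpow_sum_rpow {ι : Type*} {s : Finset ι} {r : ℝ} (hr : 0 < r) {x : ι → ℝ}
    (hx : ∀ i ∈ s, 0 ≤ x i) {j : ι} (hj : j ∈ s) : x j ≤ (∑ i ∈ s, x i ^ r) ^ (1 / r) := by
  calc x j = (x j ^ r) ^ (1 / r) := by rw [one_div, rpow_rpow_inv (hx j hj) hr.ne']
    _ ≤ (∑ i ∈ s, x i ^ r) ^ (1 / r) :=
      rpow_le_rpow (rpow_nonneg (hx j hj) _)
        (single_le_sum (fun i hi => rpow_nonneg (hx i hi) r) hj) (by positivity)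

lemma sum_div_rpow_sum_rpow_le_one {ι : Type*} (s : Finset ι) {r : ℝ} (hr : 0 < r)
    {x : ι → ℝ} (hx : ∀ i ∈ s, 0 ≤ x i) :
    ∑ i ∈ s, (x i / (∑ j ∈ s, x j ^ r) ^ (1 / r)) ^ r ≤ 1 := by
  have hS : 0 ≤ ∑ j ∈ s, x j ^ r := sum_nonneg fun j hj => rpow_nonneg (hx j hj) r
  calc ∑ i ∈ s, (x i / (∑ j ∈ s, x j ^ r) ^ (1 / r)) ^ r
      = (∑ i ∈ s, x i ^ r) / ∑ j ∈ s, x j ^ r := by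
        rw [sum_div]
        refine sum_congr rfl fun i hi => ?_
        rw [div_rpow (hx i hi) (rpow_nonneg hS _), one_div, rpow_inv_rpow hS hr.ne']
    _ ≤ 1 := div_self_le_one _

lemma rpow_sum_mul_rpow_le {ι : Type*} (s : Finset ι) {r y : ℝ} (hr : 0 < r) (hy : 0 ≤ y)
    {a : ι → ℝ} (ha : ∀ i ∈ s, 0 ≤ a i) (hsum : ∑ i ∈ s, a i ^ r ≤ 1) :
    (∑ i ∈ s, (a i * y) ^ r) ^ (1 / r) ≤ y := by
  have hS : 0 ≤ ∑ i ∈ s, a i ^ r := sum_nonneg fun i hi => rpow_nonneg (ha i hi) r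
  calc (∑ i ∈ s, (a i * y) ^ r) ^ (1 / r) = (∑ i ∈ s, a i ^ r) ^ (1 / r) * y := by
        rw [sum_congr rfl fun i hi => mul_rpow (ha i hi) hy, ← sum_mul,
          mul_rpow hS (rpow_nonneg hy _), one_div, rpow_rpow_inv hy hr.ne']
    _ ≤ y := mul_le_of_le_one_left hy (rpow_le_one hS hsum (by positivity))

lemma sum_rpow_le_rpow_sum {ι : Type*} (s : Finset ι) {r : ℝ} (hr : 1 ≤ r) {a : ι → ℝ}
    (ha : ∀ i ∈ s, 0 ≤ a i) : ∑ i ∈ s, a i ^ r ≤ (∑ i ∈ s, a i) ^ r := by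
  classical
  induction s using Finset.induction_on with
  | empty => simp [zero_rpow (by positivity : r ≠ 0)]
  | insert j s hj ih =>
    rw [sum_insert hj, sum_insert hj]
    have ha' : ∀ i ∈ s, 0 ≤ a i := fun i hi => ha i (mem_insert_of_mem hi)
    calc a j ^ r + ∑ i ∈ s, a i ^ r ≤ a j ^ r + (∑ i ∈ s, a i) ^ r := by grw [ih ha']
      _ ≤ (a j + ∑ i ∈ s, a i) ^ r :=
        add_rpow_le_rpow_add (ha j (mem_insert_self j s)) (sum_nonneg ha') hr

lemma rpow_sum_rpow_le_sum {ι : Type*} (s : Finset ι) {r : ℝ} (hr : 1 ≤ r) {a : ι → ℝ}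
    (ha : ∀ i ∈ s, 0 ≤ a i) : (∑ i ∈ s, a i ^ r) ^ (1 / r) ≤ ∑ i ∈ s, a i := by
  calc (∑ i ∈ s, a i ^ r) ^ (1 / r) ≤ ((∑ i ∈ s, a i) ^ r) ^ (1 / r) :=
        rpow_le_rpow (sum_nonneg fun i hi => rpow_nonneg (ha i hi) _)
          (sum_rpow_le_rpow_sum s hr ha) (by positivity)
    _ = ∑ i ∈ s, a i := by rw [one_div, rpow_rpow_inv (sum_nonneg ha) (by positivity)]

lemma sum_geomMean_rpow_le {ι : Type*} (s : Finset ι) {θ r : ℝ} (hθ : 0 < θ) (hθ1 : θ < 1)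
    (hr : 0 < r) {b c : ι → ℝ} (hb : ∀ i ∈ s, 0 ≤ b i) (hc : ∀ i ∈ s, 0 ≤ c i) :
    ∑ i ∈ s, (b i ^ (1 - θ) * c i ^ θ) ^ r ≤
      (∑ i ∈ s, b i ^ r) ^ (1 - θ) * (∑ i ∈ s, c i ^ r) ^ θ := by
  have h1θ : 0 < 1 - θ := by linarith
  have hpqr : HolderTriple (r / (1 - θ)) (r / θ) r :=
    ⟨by field_simp; ring, by positivity, by positivity⟩
  convert Lr_rpow_le_Lp_mul_Lq_of_nonneg s hpqr (f := fun i => b i ^ (1 - θ))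
    (g := fun i => c i ^ θ) (fun i hi => rpow_nonneg (hb i hi) _)
    (fun i hi => rpow_nonneg (hc i hi) _) using 3
  · exact sum_congr rfl fun i hi => by rw [← rpow_mul (hb i hi), mul_div_cancel₀ _ h1θ.ne']
  · field_simp
  · exact sum_congr rfl fun i hi => by rw [← rpow_mul (hc i hi), mul_div_cancel₀ _ hθ.ne']
  · field_simp

lemma rpow_sum_geomMean_rpow_le {ι : Type*} (s : Finset ι) {θ r : ℝ} (hθ : 0 < θ)
    (hθ1 : θ < 1) (hr : 0 < r) {b c : ι → ℝ} (hb : ∀ i ∈ s, 0 ≤ b i) (hc : ∀ i ∈ s, 0 ≤ c i) :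
    (∑ i ∈ s, (b i ^ (1 - θ) * c i ^ θ) ^ r) ^ (1 / r) ≤
      ((∑ i ∈ s, b i ^ r) ^ (1 / r)) ^ (1 - θ) * ((∑ i ∈ s, c i ^ r) ^ (1 / r)) ^ θ := by
  have hB : 0 ≤ ∑ i ∈ s, b i ^ r := sum_nonneg fun i hi => rpow_nonneg (hb i hi) r
  have hC : 0 ≤ ∑ i ∈ s, c i ^ r := sum_nonneg fun i hi => rpow_nonneg (hc i hi) r
  calc (∑ i ∈ s, (b i ^ (1 - θ) * c i ^ θ) ^ r) ^ (1 / r)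
      ≤ ((∑ i ∈ s, b i ^ r) ^ (1 - θ) * (∑ i ∈ s, c i ^ r) ^ θ) ^ (1 / r) := by
        gcongr
        · exact sum_nonneg fun i hi => rpow_nonneg
            (mul_nonneg (rpow_nonneg (hb i hi) _) (rpow_nonneg (hc i hi) _)) r
        · exact sum_geomMean_rpow_le s hθ hθ1 hr hb hc
    _ = _ := by
        rw [mul_rpow (rpow_nonneg hB _) (rpow_nonneg hC _), ← rpow_mul hB, ← rpow_mul hB,
          ← rpow_mul hC, ← rpow_mul hC, mul_comm (1 - θ), mul_comm θ]

lemma geomMean_div_mul_rpow {θ x G H : ℝ} (hx : 0 ≤ x) (hG : 0 ≤ G) (hH : 0 ≤ H)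
    (h : G ^ (1 - θ) * H ^ θ = 0 → x = 0) :
    (x / (G ^ (1 - θ) * H ^ θ) * G) ^ (1 - θ) * (x / (G ^ (1 - θ) * H ^ θ) * H) ^ θ = x := by
  rw [mul_rpow_one_sub_mul_mul_rpow θ (div_nonneg hx (by positivity)) hG hH,
    div_mul_cancel_of_imp h]

end RealInequalities

namespace BFS

lemma mem_sum (X : BFS Ω μ K) {ι : Type*} (s : Finset ι) {φ : ι → Ω → K}
    (hφ : ∀ i ∈ s, X.mem (φ i)) : X.mem (fun ω => ∑ i ∈ s, φ i ω) := by
  rw [← Finset.sum_fn]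
  exact Finset.sum_induction φ X.mem X.mem_add X.mem_zero hφ

lemma mem_norm (X : BFS Ω μ ℝ) {φ : Ω → ℝ} (hφ : X.mem φ) : X.mem (fun ω => ‖φ ω‖) :=
  (X.ideal _ φ (X.mem_meas φ hφ).norm hφ (by simp)).1

lemma mem_mul_of_norm_le_one (X : BFS Ω μ K) {t g : Ω → K} (hg : X.mem g)
    (ht : AEStronglyMeasurable t μ) (ht1 : ∀ᵐ ω ∂μ, ‖t ω‖ ≤ 1) :
    X.mem (fun ω => t ω * g ω) := by
  refine (X.ideal _ g (ht.mul (X.mem_meas g hg)) hg ?_).1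
  filter_upwards [ht1] with ω hω
  rw [Pi.mul_apply, norm_mul]
  exact mul_le_of_le_one_left (norm_nonneg _) hω

lemma RConcaveWith.nrm_eq_zero_of_neg {X : BFS Ω μ K} {r C : ℝ} (hX : X.RConcaveWith r C)
    (hr : r ≠ 0) (hC : C < 0) {φ : Ω → K} (hφ : X.mem φ) : X.nrm φ = 0 := by
  have h := hX 1 (fun _ => φ) (fun _ => hφ)
  rw [Fin.sum_univ_one, one_div, Real.rpow_rpow_inv (X.nrm_nonneg φ) hr] at h
  exact le_antisymm (h.trans (mul_nonpos_of_nonpos_of_nonneg hC.le (X.nrm_nonneg _)))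
    (X.nrm_nonneg φ)

section Calderon

def IsCalRep (X₀ X₁ : BFS Ω μ K) (θ : ℝ) (f g h : Ω → K) : Prop :=
  X₀.mem g ∧ X₁.mem h ∧ ∀ᵐ ω ∂μ, ‖f ω‖ = ‖g ω‖ ^ (1 - θ) * ‖h ω‖ ^ θ

variable {X₀ X₁ : BFS Ω μ K} {θ : ℝ} {f : Ω → K}

lemma calNrm_eq_sInf : calNrm X₀ X₁ θ f = sInf {c : ℝ | ∃ g h, IsCalRep X₀ X₁ θ f g h ∧
    c = X₀.nrm g ^ (1 - θ) * X₁.nrm h ^ θ} := by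
  simp only [calNrm, IsCalRep, and_assoc]

lemma nrm_rpow_mul_nrm_rpow_nonneg (g h : Ω → K) : 0 ≤ X₀.nrm g ^ (1 - θ) * X₁.nrm h ^ θ :=
  mul_nonneg (Real.rpow_nonneg (X₀.nrm_nonneg g) _) (Real.rpow_nonneg (X₁.nrm_nonneg h) _)

lemma calNrm_nonneg : 0 ≤ calNrm X₀ X₁ θ f :=
  Real.sInf_nonneg <| by
    rintro c ⟨g, h, -, -, -, rfl⟩
    exact nrm_rpow_mul_nrm_rpow_nonneg g h

lemma calNrm_le {g h : Ω → K} (hrep : IsCalRep X₀ X₁ θ f g h) :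
    calNrm X₀ X₁ θ f ≤ X₀.nrm g ^ (1 - θ) * X₁.nrm h ^ θ := by
  rw [calNrm_eq_sInf]
  refine csInf_le ⟨0, ?_⟩ ⟨g, h, hrep, rfl⟩
  rintro c ⟨g, h, -, rfl⟩
  exact nrm_rpow_mul_nrm_rpow_nonneg g h

lemma le_mul_calNrm {a b : ℝ} (hb : 0 ≤ b) (hne : ∃ g h, IsCalRep X₀ X₁ θ f g h)
    (hle : ∀ g h, IsCalRep X₀ X₁ θ f g h → a ≤ b * (X₀.nrm g ^ (1 - θ) * X₁.nrm h ^ θ)) :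
    a ≤ b * calNrm X₀ X₁ θ f := by
  obtain ⟨g, h, hrep⟩ := hne
  rw [calNrm_eq_sInf, ← smul_eq_mul, ← Real.sInf_smul_of_nonneg hb]
  refine le_csInf ⟨_, Set.smul_mem_smul_set ⟨g, h, hrep, rfl⟩⟩ ?_
  rintro _ ⟨_, ⟨g, h, hrep, rfl⟩, rfl⟩
  exact hle g h hrep

lemma calNrm_eq_zero_of_forall
    (h0 : ∀ g h, X₀.mem g → X₁.mem h → X₀.nrm g ^ (1 - θ) * X₁.nrm h ^ θ = 0) :
    calNrm X₀ X₁ θ f = 0 :=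
  le_antisymm (Real.sInf_nonpos <| by rintro c ⟨g, h, hg, hh, -, rfl⟩; exact (h0 g h hg hh).le)
    calNrm_nonneg

lemma rpow_sum_calNrm_rpow_le_of_isCalRep {r : ℝ} (hr : 0 < r) (hθ : 0 < θ) (hθ1 : θ < 1)
    {m : ℕ} {f g h : Fin m → Ω → K} (hrep : ∀ i, IsCalRep X₀ X₁ θ (f i) (g i) (h i)) :
    (∑ i, calNrm X₀ X₁ θ (f i) ^ r) ^ (1 / r) ≤
      ((∑ i, X₀.nrm (g i) ^ r) ^ (1 / r)) ^ (1 - θ) * ((∑ i, X₁.nrm (h i) ^ r) ^ (1 / r)) ^ θ :=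
  calc (∑ i, calNrm X₀ X₁ θ (f i) ^ r) ^ (1 / r)
      ≤ (∑ i, (X₀.nrm (g i) ^ (1 - θ) * X₁.nrm (h i) ^ θ) ^ r) ^ (1 / r) := by
        gcongr with i
        · exact sum_nonneg fun i _ => Real.rpow_nonneg calNrm_nonneg r
        · exact calNrm_nonneg
        · exact calNrm_le (hrep i)
    _ ≤ _ := rpow_sum_geomMean_rpow_le univ hθ hθ1 hr (fun i _ => X₀.nrm_nonneg _)
          fun i _ => X₁.nrm_nonneg _

end Calderon

section RealValued

variable {X₀ X₁ : BFS Ω μ ℝ} {θ : ℝ}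

lemma isCalRep_div_mul {f g h : Ω → ℝ} (hf : AEStronglyMeasurable f μ) (hg : X₀.mem g)
    (hh : X₁.mem h) (hle : ∀ᵐ ω ∂μ, ‖f ω‖ ≤ ‖g ω‖ ^ (1 - θ) * ‖h ω‖ ^ θ) :
    IsCalRep X₀ X₁ θ f (fun ω => ‖f ω‖ / (‖g ω‖ ^ (1 - θ) * ‖h ω‖ ^ θ) * g ω)
      (fun ω => ‖f ω‖ / (‖g ω‖ ^ (1 - θ) * ‖h ω‖ ^ θ) * h ω) := by
  set t : Ω → ℝ := fun ω => ‖f ω‖ / (‖g ω‖ ^ (1 - θ) * ‖h ω‖ ^ θ)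
  have hE : ∀ ω, 0 ≤ ‖g ω‖ ^ (1 - θ) * ‖h ω‖ ^ θ := fun ω => by positivity
  have ht : AEStronglyMeasurable t μ := by
    have := hf.aemeasurable
    have := (X₀.mem_meas g hg).aemeasurable
    have := (X₁.mem_meas h hh).aemeasurable
    exact (by fun_prop : AEMeasurable t μ).aestronglyMeasurable
  have ht1 : ∀ᵐ ω ∂μ, ‖t ω‖ ≤ 1 := by
    filter_upwards [hle] with ω hω
    simp only [t, norm_div, norm_norm, Real.norm_of_nonneg (hE ω)]
    exact div_le_one_of_le₀ hω (hE ω)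
  refine ⟨X₀.mem_mul_of_norm_le_one hg ht ht1, X₁.mem_mul_of_norm_le_one hh ht ht1, ?_⟩
  filter_upwards [hle] with ω hω
  rw [norm_mul, norm_mul, norm_div, norm_norm, Real.norm_of_nonneg (hE ω),
    geomMean_div_mul_rpow (norm_nonneg _) (norm_nonneg _) (norm_nonneg _)
      fun h0 => le_antisymm (h0 ▸ hω) (norm_nonneg _)]

lemma exists_isCalRep_rpow_sum (hθ : 0 < θ) (hθ1 : θ < 1) {r : ℝ} (hr : 1 ≤ r) {m : ℕ}
    {f : Fin m → Ω → ℝ} (hf : ∀ i, calMem X₀ X₁ θ (f i)) :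
    ∃ g h, IsCalRep X₀ X₁ θ (fun ω => (∑ i, ‖f i ω‖ ^ r) ^ (1 / r)) g h := by
  choose hfm g h hg hh hrep using hf
  have hF : AEStronglyMeasurable (fun ω => (∑ i, ‖f i ω‖ ^ r) ^ (1 / r)) μ := by
    have := fun i => (hfm i).aemeasurable
    exact (by fun_prop : AEMeasurable _ μ).aestronglyMeasurable
  refine ⟨_, _, isCalRep_div_mul hF (mem_sum X₀ univ fun i _ => mem_norm X₀ (hg i))
    (mem_sum X₁ univ fun i _ => mem_norm X₁ (hh i)) ?_⟩
  filter_upwards [ae_all_iff.2 hrep] with ω hω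
  calc ‖(∑ i, ‖f i ω‖ ^ r) ^ (1 / r)‖ = (∑ i, ‖f i ω‖ ^ r) ^ (1 / r) :=
        Real.norm_of_nonneg (by positivity)
    _ ≤ ∑ i, ‖f i ω‖ := rpow_sum_rpow_le_sum univ hr fun i _ => norm_nonneg _
    _ = ∑ i, ‖g i ω‖ ^ (1 - θ) * ‖h i ω‖ ^ θ := sum_congr rfl fun i _ => hω i
    _ ≤ (∑ i, ‖g i ω‖) ^ (1 - θ) * (∑ i, ‖h i ω‖) ^ θ := by
        simpa using sum_geomMean_rpow_le univ hθ hθ1 one_pos (fun i _ => norm_nonneg (g i ω))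
          (fun i _ => norm_nonneg (h i ω))
    _ = ‖∑ i, ‖g i ω‖‖ ^ (1 - θ) * ‖∑ i, ‖h i ω‖‖ ^ θ := by
        rw [Real.norm_of_nonneg (by positivity), Real.norm_of_nonneg (by positivity)]

lemma RConcaveWith.rpow_sum_nrm_mul_le {X : BFS Ω μ ℝ} {r C : ℝ} (hX : X.RConcaveWith r C)
    (hr : 0 < r) (hC : 0 ≤ C) {g : Ω → ℝ} (hg : X.mem g) {m : ℕ} {a : Fin m → Ω → ℝ}
    (ha : ∀ i, X.mem fun ω => a i ω * g ω) (ha0 : ∀ i ω, 0 ≤ a i ω)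
    (hsum : ∀ᵐ ω ∂μ, ∑ i, a i ω ^ r ≤ 1) :
    (∑ i, X.nrm (fun ω => a i ω * g ω) ^ r) ^ (1 / r) ≤ C * X.nrm g := by
  have hconc := hX m _ ha
  simp only [RCLike.ofReal_real_eq_id, id] at hconc
  refine hconc.trans (mul_le_mul_of_nonneg_left ((X.ideal _ g ?_ hg ?_).2) hC)
  · have := fun i => (X.mem_meas _ (ha i)).aemeasurable
    exact (by fun_prop : AEMeasurable _ μ).aestronglyMeasurable
  · filter_upwards [hsum] with ω hω
    rw [Real.norm_of_nonneg (by positivity)]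
    simp only [norm_mul, Real.norm_of_nonneg (ha0 _ ω)]
    exact rpow_sum_mul_rpow_le univ hr (norm_nonneg _) (fun i _ => ha0 i ω) hω

lemma rpow_sum_calNrm_rpow_le {r C₀ C₁ : ℝ} (hr : 0 < r) (hC₀ : 0 ≤ C₀) (hC₁ : 0 ≤ C₁)
    (h₀ : X₀.RConcaveWith r C₀) (h₁ : X₁.RConcaveWith r C₁) (hθ : 0 < θ) (hθ1 : θ < 1)
    {m : ℕ} {f : Fin m → Ω → ℝ} (hf : ∀ i, AEStronglyMeasurable (f i) μ) {g h : Ω → ℝ}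
    (hrep : IsCalRep X₀ X₁ θ (fun ω => (∑ i, ‖f i ω‖ ^ r) ^ (1 / r)) g h) :
    (∑ i, calNrm X₀ X₁ θ (f i) ^ r) ^ (1 / r) ≤
      (C₀ ^ (1 - θ) * C₁ ^ θ) * (X₀.nrm g ^ (1 - θ) * X₁.nrm h ^ θ) := by
  obtain ⟨hg, hh, hF⟩ := hrep
  set a : Fin m → Ω → ℝ := fun i ω => ‖f i ω‖ / (‖g ω‖ ^ (1 - θ) * ‖h ω‖ ^ θ)
  have hFE : ∀ᵐ ω ∂μ, (∑ i, ‖f i ω‖ ^ r) ^ (1 / r) = ‖g ω‖ ^ (1 - θ) * ‖h ω‖ ^ θ := by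
    filter_upwards [hF] with ω hω
    rwa [Real.norm_of_nonneg (by positivity)] at hω
  have hrep_i : ∀ i, IsCalRep X₀ X₁ θ (f i) (fun ω => a i ω * g ω) (fun ω => a i ω * h ω) :=
    fun i => isCalRep_div_mul (hf i) hg hh <| by
      filter_upwards [hFE] with ω hω
      exact hω ▸ le_rpow_sum_rpow hr (x := fun j => ‖f j ω‖) (fun j _ => norm_nonneg _)
        (mem_univ i)
  have hsum : ∀ᵐ ω ∂μ, ∑ i, a i ω ^ r ≤ 1 := by
    filter_upwards [hFE] with ω hω
    simp only [a, ← hω]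
    exact sum_div_rpow_sum_rpow_le_one univ hr fun i _ => norm_nonneg _
  have ha0 : ∀ i ω, 0 ≤ a i ω := fun i ω => by positivity
  calc (∑ i, calNrm X₀ X₁ θ (f i) ^ r) ^ (1 / r)
      ≤ ((∑ i, X₀.nrm (fun ω => a i ω * g ω) ^ r) ^ (1 / r)) ^ (1 - θ) *
          ((∑ i, X₁.nrm (fun ω => a i ω * h ω) ^ r) ^ (1 / r)) ^ θ :=
        rpow_sum_calNrm_rpow_le_of_isCalRep hr hθ hθ1 hrep_i
    _ ≤ (C₀ * X₀.nrm g) ^ (1 - θ) * (C₁ * X₁.nrm h) ^ θ := by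
        have hA₀ : 0 ≤ (∑ i, X₀.nrm (fun ω => a i ω * g ω) ^ r) ^ (1 / r) :=
          Real.rpow_nonneg (sum_nonneg fun i _ => Real.rpow_nonneg (X₀.nrm_nonneg _) r) _
        have hA₁ : 0 ≤ (∑ i, X₁.nrm (fun ω => a i ω * h ω) ^ r) ^ (1 / r) :=
          Real.rpow_nonneg (sum_nonneg fun i _ => Real.rpow_nonneg (X₁.nrm_nonneg _) r) _
        refine mul_le_mul (Real.rpow_le_rpow hA₀ ?_ (by linarith))
          (Real.rpow_le_rpow hA₁ ?_ hθ.le) (Real.rpow_nonneg hA₁ _)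
          (Real.rpow_nonneg (mul_nonneg hC₀ (X₀.nrm_nonneg g)) _)
        · exact h₀.rpow_sum_nrm_mul_le hr hC₀ hg (fun i => (hrep_i i).1) ha0 hsum
        · exact h₁.rpow_sum_nrm_mul_le hr hC₁ hh (fun i => (hrep_i i).2.1) ha0 hsum
    _ = (C₀ ^ (1 - θ) * C₁ ^ θ) * (X₀.nrm g ^ (1 - θ) * X₁.nrm h ^ θ) := by
        rw [Real.mul_rpow hC₀ (X₀.nrm_nonneg g), Real.mul_rpow hC₁ (X₁.nrm_nonneg h)]
        ring

end RealValued

end BFS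

theorem statement6_general {Ω' : Type*} [MeasurableSpace Ω'] (μ : Measure Ω')
    (X₀ X₁ : BFS Ω' μ ℝ)
    (r : ℝ) (hr : 1 ≤ r) (C₀ C₁ : ℝ)
    (h₀ : X₀.RConcaveWith r C₀) (h₁ : X₁.RConcaveWith r C₁)
    (θ : ℝ) (hθ : 0 < θ) (hθ1 : θ < 1)
    (m : ℕ) (f : Fin m → Ω' → ℝ) (hf : ∀ i, BFS.calMem X₀ X₁ θ (f i)) :
    (∑ i, BFS.calNrm X₀ X₁ θ (f i) ^ r) ^ (1 / r) ≤
      (C₀ ^ (1 - θ) * C₁ ^ θ) *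
        BFS.calNrm X₀ X₁ θ (fun ω => (∑ i, ‖f i ω‖ ^ r) ^ (1 / r)) := by
  have hr0 : 0 < r := by linarith
  by_cases hC : 0 ≤ C₀ ∧ 0 ≤ C₁
  · obtain ⟨hC₀, hC₁⟩ := hC
    exact BFS.le_mul_calNrm (by positivity) (BFS.exists_isCalRep_rpow_sum hθ hθ1 hr hf)
      fun _ _ hrep =>
        BFS.rpow_sum_calNrm_rpow_le hr0 hC₀ hC₁ h₀ h₁ hθ hθ1 (fun i => (hf i).1) hrep
  · have hzero : ∀ φ, BFS.calNrm X₀ X₁ θ φ = 0 := fun φ =>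
      BFS.calNrm_eq_zero_of_forall fun g h hg hh => by
        rcases not_and_or.mp hC with hC₀ | hC₁
        · rw [h₀.nrm_eq_zero_of_neg hr0.ne' (not_le.mp hC₀) hg, Real.zero_rpow (by linarith),
            zero_mul]
        · rw [h₁.nrm_eq_zero_of_neg hr0.ne' (not_le.mp hC₁) hh, Real.zero_rpow hθ.ne', mul_zero]
    simp [hzero, Real.zero_rpow, hr0.ne']

/-- the Calderón product of two `r`-concave Banach function spaces
is `r`-concave with constant `≤ M_(r)(X₀)^{1-θ}·M_(r)(X₁)^θ`. -/
theorem statement6 {Ω' : Type*} [MeasurableSpace Ω'] (μ : Measure Ω')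
    [SigmaFinite μ] (hμc : μ.IsComplete) (X₀ X₁ : BFS Ω' μ ℝ)
    (r : ℝ) (hr : 1 ≤ r) (C₀ C₁ : ℝ)
    (h₀ : X₀.RConcaveWith r C₀) (h₁ : X₁.RConcaveWith r C₁)
    (θ : ℝ) (hθ : 0 < θ) (hθ1 : θ < 1)
    (m : ℕ) (f : Fin m → Ω' → ℝ) (hf : ∀ i, BFS.calMem X₀ X₁ θ (f i)) :
    (∑ i, BFS.calNrm X₀ X₁ θ (f i) ^ r) ^ (1 / r) ≤
      (C₀ ^ (1 - θ) * C₁ ^ θ) *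
        BFS.calNrm X₀ X₁ θ (fun ω => (∑ i, ‖f i ω‖ ^ r) ^ (1 / r)) :=
  statement6_general μ X₀ X₁ r hr C₀ C₁ h₀ h₁ θ hθ hθ1 m f hf

end Paper
end
end
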